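/- If a directed binary Boolean VCSP instance has a triangle-free constraint graph, then it is oriented: no pair of variables has arcs in both directions. -/
import Mathlib


/-- A binary Boolean VCSP instance: unary weights `c` and symmetric binary
weights `w` (with `w i j = 0` when `{i,j}` is not an edge). -/
structure VCSP (n : ℕ) where
  c : Fin n → ℤ
  w : Fin n → Fin n → ℤ
  symm : ∀ i j, w i j = w j i
  diag : ∀ i, w i i = 0

variable {n : ℕ}

/-- Boolean as a 0/1 integer. -/
def bv (b : Bool) : ℤ := if b then 1 else 0

/-- The quadratic pseudo-Boolean fitness function implemented by the instance. -/
def VCSP.fit (C : VCSP n) (x : Fin n → Bool) : ℤ :=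
  ∑ i, C.c i * bv (x i) +
    ∑ i, ∑ j, if i < j then C.w i j * bv (x i) * bv (x j) else 0

/-- The effective unary `ĉ_i(x, S)`. -/
def VCSP.effU (C : VCSP n) (i : Fin n) (x : Fin n → Bool) (S : Finset (Fin n)) : ℤ :=
  C.c i + ∑ j ∈ Finset.univ \ S, bv (x j) * C.w i j

/-- Arc `i → j`. -/
def Arc (C : VCSP n) (i j : Fin n) : Prop :=
  ∃ y : Fin n → Bool,
    |C.w i j| > |C.effU j y {i, j}| ∧
    Int.sign (C.w i j) ≠ Int.sign (C.effU j y {i, j})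

/-- Bidirected arc `i ↔ j`. -/
def Bidir (C : VCSP n) (i j : Fin n) : Prop :=
  ∃ x : Fin n → Bool,
    (|C.w i j| > |C.effU i x {i, j}| ∧
      Int.sign (C.w i j) ≠ Int.sign (C.effU i x {i, j})) ∧
    (|C.w i j| > |C.effU j x {i, j}| ∧
      Int.sign (C.w i j) ≠ Int.sign (C.effU j x {i, j}))

/-- A directed VCSP instance with triangle-free constraint graph is oriented:
no pair of variables has arcs in both directions. -/
theorem directed_triangleFree_oriented (C : VCSP n)
    (hdir : ∀ i j, ¬ Bidir C i j)
    (htf : ∀ i j, C.w i j ≠ 0 → ∀ k, ¬ (C.w i k ≠ 0 ∧ C.w j k ≠ 0)) :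
    ∀ i j, ¬ (Arc C i j ∧ Arc C j i) := by
  rintro i j ⟨⟨y, hy1, hy2⟩, ⟨z, hz1, hz2⟩⟩
  have hw : C.w i j ≠ 0 := by
    intro h
    rw [h] at hy1
    have := abs_nonneg (C.effU j y {i, j})
    simp at hy1
    omega
  have hji : ({j, i} : Finset (Fin n)) = {i, j} := Finset.pair_comm j i
  rw [C.symm j i, hji] at hz1 hz2
  set x : Fin n → Bool := fun k => if C.w i k ≠ 0 then z k else y k with hx
  have hEj : C.effU j x {i, j} = C.effU j y {i, j} := by
    unfold VCSP.effU
    congr 1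
    apply Finset.sum_congr rfl
    intro k hk
    by_cases h : C.w j k = 0
    · simp [h]
    · have hik : C.w i k = 0 := by
        have := htf i j hw k
        tauto
      simp [hx, hik]
  have hEi : C.effU i x {i, j} = C.effU i z {i, j} := by
    unfold VCSP.effU
    congr 1
    apply Finset.sum_congr rfl
    intro k hk
    by_cases h : C.w i k = 0
    · simp [h]
    · simp [hx, h]
  exact hdir i j ⟨x, ⟨by rw [hEi]; exact hz1, by rw [hEi]; exact hz2⟩,
    ⟨by rw [hEj]; exact hy1, by rw [hEj]; exact hy2⟩⟩
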